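/- For every LTL formula φ in negation normal form and every infinite word ξ : ℕ → 2^AP, ξ satisfies φ if and only if there exists a clause α ∧ X ψ ∈ DNF(φ) such that the first letter ξ(0) propositionally satisfies α and the suffix ξ_1 satisfies ψ. (Correctness of the disjunctive-normal-form expansion: φ is semantically equivalent to the disjunction of its DNF clauses.) -/

import Mathlib

/-!
Induction on `φ`. Disjunction and conjunction commute with the operations `DNF` performs on
clause sets (union, and pairwise merging of clauses). For `U` and `R` one uses the expansion
laws `φ U ψ ≡ ψ ∨ (φ ∧ X (φ U ψ))` and `φ R ψ ≡ (φ ∧ ψ) ∨ (ψ ∧ X (φ R ψ))`, which are the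
first-position case split of the quantifier over positions in their semantics.
-/

namespace DNFLTL

/-- Literals: atomic propositions or their negations. -/
inductive Lit (AP : Type) : Type
  | pos : AP → Lit AP
  | neg : AP → Lit AP
deriving DecidableEq

/-- LTL formulas in negation normal form:
`True | a | ¬a | φ∧φ | φ∨φ | φ U φ | φ R φ | X φ`. -/
inductive LTL (AP : Type) : Type
  | tt    : LTL AP
  | atom  : AP → LTL AP
  | natom : AP → LTL AP
  | and   : LTL AP → LTL AP → LTL AP
  | or    : LTL AP → LTL AP → LTL AP
  | untl  : LTL AP → LTL AP → LTL AP
  | rel   : LTL AP → LTL AP → LTL AP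
  | next  : LTL AP → LTL AP
deriving DecidableEq

variable {AP : Type}

/-- The suffix `ξ_i` of an infinite word. -/
def suff (ξ : ℕ → Set AP) (i : ℕ) : ℕ → Set AP := fun n => ξ (n + i)

/-- Standard LTL satisfaction `ξ ⊨ φ`. -/
def Sat : (ℕ → Set AP) → LTL AP → Prop
  | _, .tt => True
  | ξ, .atom a => a ∈ ξ 0
  | ξ, .natom a => a ∉ ξ 0
  | ξ, .and φ ψ => Sat ξ φ ∧ Sat ξ ψ
  | ξ, .or φ ψ => Sat ξ φ ∨ Sat ξ ψ
  | ξ, .untl φ ψ => ∃ i, Sat (suff ξ i) ψ ∧ ∀ j < i, Sat (suff ξ j) φ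
  | ξ, .rel φ ψ => (∀ i, Sat (suff ξ i) ψ) ∨
      ∃ i, Sat (suff ξ i) φ ∧ Sat (suff ξ i) ψ ∧ ∀ j < i, Sat (suff ξ j) ψ
  | ξ, .next φ => Sat (suff ξ 1) φ

/-- A letter `ω ∈ 2^AP` satisfies a literal. -/
def SatLit (ω : Set AP) : Lit AP → Prop
  | .pos a => a ∈ ω
  | .neg a => a ∉ ω

/-- A letter satisfies a finite conjunction of literals (represented as its set of literals). -/
def SatConj (ω : Set AP) (α : Set (Lit AP)) : Prop := ∀ l ∈ α, SatLit ω l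

/-- `DNF φ`: the set of clauses `α ∧ X ψ` of the disjunctive normal form of `φ`.
A clause is a pair `(α, ψ)` where `α` is a finite conjunction of literals,
represented as its set `CF(α)` of literals. -/
def DNF : LTL AP → Set (Set (Lit AP) × LTL AP)
  | .tt => {(∅, .tt)}
  | .atom a => {({Lit.pos a}, .tt)}
  | .natom a => {({Lit.neg a}, .tt)}
  | .next φ => {(∅, φ)}
  | .or φ ψ => DNF φ ∪ DNF ψ
  | .and φ ψ => {c | ∃ c1 ∈ DNF φ, ∃ c2 ∈ DNF ψ, c = (c1.1 ∪ c2.1, .and c1.2 c2.2)}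
  | .untl φ ψ => DNF ψ ∪ {c | ∃ c1 ∈ DNF φ, c = (c1.1, .and c1.2 (.untl φ ψ))}
  | .rel φ ψ =>
      {c | ∃ c1 ∈ DNF φ, ∃ c2 ∈ DNF ψ, c = (c1.1 ∪ c2.1, .and c1.2 c2.2)} ∪
      {c | ∃ c2 ∈ DNF ψ, c = (c2.1, .and c2.2 (.rel φ ψ))}

/-- `φ →ω ψ`: transition on a letter. -/
def StepW (φ : LTL AP) (ω : Set AP) (ψ : LTL AP) : Prop :=
  ∃ α, (α, ψ) ∈ DNF φ ∧ SatConj ω α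

/-- `φ →η ψ`: expansion along a finite word. -/
def StepWord : LTL AP → List (Set AP) → LTL AP → Prop
  | φ, [], ψ => φ = ψ
  | φ, ω :: η, ψ => ∃ χ, StepW φ ω χ ∧ StepWord χ η ψ

/-- `φ →α ψ` for some label `α`: a single expansion step. -/
def Expand (φ ψ : LTL AP) : Prop := ∃ α, (α, ψ) ∈ DNF φ

/-- `EF φ`: all formulas expandable from `φ`, together with `φ` itself. -/
def EF (φ : LTL AP) : Set (LTL AP) := {ψ | Relation.ReflTransGen Expand φ ψ}

/-- `φ ↪ ψ`: expandable by a nonempty chain. -/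
def ExpandPlus (φ ψ : LTL AP) : Prop := Relation.TransGen Expand φ ψ

/-- The prefix `ξ^n` of an infinite word (first `n` letters). -/
def pref (ξ : ℕ → Set AP) (n : ℕ) : List (Set AP) := (List.range n).map ξ

/-- The finite segment `ξ(a) ξ(a+1) … ξ(b-1)` of an infinite word. -/
def seg (ξ : ℕ → Set AP) (a b : ℕ) : List (Set AP) :=
  (List.range (b - a)).map (fun j => ξ (a + j))

/-- `φ →ξ φ` for an infinite word `ξ`: `ξ` can be partitioned into finite nonempty
words `η0 η1 η2 …` (given by strictly monotone cut points) with `φ →ηi φ` for all `i`. -/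
def LoopOn (φ : LTL AP) (ξ : ℕ → Set AP) : Prop :=
  ∃ k : ℕ → ℕ, k 0 = 0 ∧ StrictMono k ∧ ∀ i, StepWord φ (seg ξ (k i) (k (i + 1))) φ

/-- `CF φ`: the conjuncts of `φ`, with `CF True = ∅`. -/
def CF : LTL AP → Set (LTL AP)
  | .tt => ∅
  | .and φ ψ => CF φ ∪ CF ψ
  | φ => {φ}

/-- `S ⊨_f φ` for a set of literals `S`. -/
def SatF (S : Set (Lit AP)) : LTL AP → Prop
  | .tt => True
  | .atom a => Lit.pos a ∈ S
  | .natom a => Lit.neg a ∈ S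
  | .and φ ψ => SatF S φ ∧ SatF S ψ
  | .or φ ψ => SatF S φ ∨ SatF S ψ
  | .untl _ ψ => SatF S ψ
  | .rel _ ψ => SatF S ψ
  | .next ψ => SatF S ψ

/-- A labelled expansion chain `φ = φ0 →α0 φ1 →α1 … →αn φ(n+1) = χ` along the
finite word `η = ω0…ωn` with `ωi ⊨ αi`, accumulating `S = ⋃ CF(αj)`. -/
inductive LChain : LTL AP → List (Set AP) → Set (Lit AP) → LTL AP → Prop
  | nil (φ : LTL AP) : LChain φ [] ∅ φ
  | cons {φ ψ χ : LTL AP} {η : List (Set AP)} {S α : Set (Lit AP)} {ω : Set AP} :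
      (α, ψ) ∈ DNF φ → SatConj ω α → LChain ψ η S χ → LChain φ (ω :: η) (α ∪ S) χ

/-- `η ⊨_f φ` for a finite word `η`. -/
def SatWF (η : List (Set AP)) (φ : LTL AP) : Prop :=
  ∃ S χ, LChain φ η S χ ∧ SatF S φ

/-- The obligation set `OS φ`. -/
def OS : LTL AP → Set (Set (Lit AP))
  | .tt => {∅}
  | .atom a => {{Lit.pos a}}
  | .natom a => {{Lit.neg a}}
  | .next ψ => OS ψ
  | .or φ ψ => OS φ ∪ OS ψ
  | .and φ ψ => {S | ∃ S1 ∈ OS φ, ∃ S2 ∈ OS ψ, S = S1 ∪ S2}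
  | .untl _ ψ => OS ψ
  | .rel _ ψ => OS ψ

/-- The subformulas of a formula. -/
def subf [DecidableEq AP] : LTL AP → Finset (LTL AP)
  | .tt => {.tt}
  | .atom a => {.atom a}
  | .natom a => {.natom a}
  | .and φ ψ => insert (.and φ ψ) (subf φ ∪ subf ψ)
  | .or φ ψ => insert (.or φ ψ) (subf φ ∪ subf ψ)
  | .untl φ ψ => insert (.untl φ ψ) (subf φ ∪ subf ψ)
  | .rel φ ψ => insert (.rel φ ψ) (subf φ ∪ subf ψ)
  | .next φ => insert (.next φ) (subf φ)

/-- `cl φ`: the subformulas of `φ` together with `True`. -/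
def cl [DecidableEq AP] (φ : LTL AP) : Finset (LTL AP) := insert .tt (subf φ)

/-- The atomic propositions appearing in a formula. -/
def atoms [DecidableEq AP] : LTL AP → Finset AP
  | .tt => ∅
  | .atom a => {a}
  | .natom a => {a}
  | .and φ ψ => atoms φ ∪ atoms ψ
  | .or φ ψ => atoms φ ∪ atoms ψ
  | .untl φ ψ => atoms φ ∪ atoms ψ
  | .rel φ ψ => atoms φ ∪ atoms ψ
  | .next φ => atoms φ

/-- No subformula has `R` as root operator. -/
def ReleaseFree : LTL AP → Prop
  | .tt => True
  | .atom _ => True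
  | .natom _ => True
  | .and φ ψ => ReleaseFree φ ∧ ReleaseFree ψ
  | .or φ ψ => ReleaseFree φ ∧ ReleaseFree ψ
  | .untl φ ψ => ReleaseFree φ ∧ ReleaseFree ψ
  | .rel _ _ => False
  | .next φ => ReleaseFree φ

/-- No subformula has `U` as root operator. -/
def UntilFree : LTL AP → Prop
  | .tt => True
  | .atom _ => True
  | .natom _ => True
  | .and φ ψ => UntilFree φ ∧ UntilFree ψ
  | .or φ ψ => UntilFree φ ∧ UntilFree ψ
  | .untl _ _ => False
  | .rel φ ψ => UntilFree φ ∧ UntilFree ψ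
  | .next φ => UntilFree φ

/-- The root operator is Until or Release. -/
def isUntilOrRelease : LTL AP → Prop
  | .untl _ _ => True
  | .rel _ _ => True
  | _ => False

lemma exists_until_iff (p q : ℕ → Prop) :
    (∃ i, q i ∧ ∀ j < i, p j) ↔ q 0 ∨ p 0 ∧ ∃ i, q (i + 1) ∧ ∀ j < i, p (j + 1) := by
  rw [← Nat.or_exists_add_one]
  simp only [Nat.forall_lt_succ_left, Nat.not_lt_zero, IsEmpty.forall_iff, implies_true, and_true,
    and_left_comm (b := p 0), exists_and_left]

lemma sat_untl_iff (ξ : ℕ → Set AP) (φ ψ : LTL AP) :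
    Sat ξ (.untl φ ψ) ↔ Sat ξ ψ ∨ Sat ξ φ ∧ Sat (suff ξ 1) (.untl φ ψ) :=
  -- `suff ξ 0 = ξ` and `suff ξ (i + 1) = suff (suff ξ 1) i` hold definitionally
  exists_until_iff (fun j => Sat (suff ξ j) φ) (fun i => Sat (suff ξ i) ψ)

lemma sat_rel_iff (ξ : ℕ → Set AP) (φ ψ : LTL AP) :
    Sat ξ (.rel φ ψ) ↔ Sat ξ φ ∧ Sat ξ ψ ∨ Sat ξ ψ ∧ Sat (suff ξ 1) (.rel φ ψ) := by
  have hrelease := exists_until_iff (fun j => Sat (suff ξ j) ψ)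
    (fun i => Sat (suff ξ i) φ ∧ Sat (suff ξ i) ψ)
  have hglobally := (Nat.and_forall_add_one (p := fun i => Sat (suff ξ i) ψ)).symm
  simp only [Sat, and_assoc] at hrelease hglobally ⊢
  rw [hrelease, hglobally]
  tauto

def SatClauses (ξ : ℕ → Set AP) (C : Set (Set (Lit AP) × LTL AP)) : Prop :=
  ∃ c ∈ C, SatConj (ξ 0) c.1 ∧ Sat (suff ξ 1) c.2

lemma satConj_union (ω : Set AP) (α β : Set (Lit AP)) :
    SatConj ω (α ∪ β) ↔ SatConj ω α ∧ SatConj ω β := by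
  simp only [SatConj, Set.mem_union, or_imp, forall_and]

lemma satClauses_union (ξ : ℕ → Set AP) (C D : Set (Set (Lit AP) × LTL AP)) :
    SatClauses ξ (C ∪ D) ↔ SatClauses ξ C ∨ SatClauses ξ D := by
  simp only [SatClauses, Set.mem_union, or_and_right, exists_or]

lemma satClauses_product (ξ : ℕ → Set AP) (C D : Set (Set (Lit AP) × LTL AP)) :
    SatClauses ξ {c | ∃ c1 ∈ C, ∃ c2 ∈ D, c = (c1.1 ∪ c2.1, .and c1.2 c2.2)} ↔
      SatClauses ξ C ∧ SatClauses ξ D := by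
  constructor
  · rintro ⟨_, ⟨c1, hc1, c2, hc2, rfl⟩, hα, hψ1, hψ2⟩
    obtain ⟨hα1, hα2⟩ := (satConj_union _ _ _).mp hα
    exact ⟨⟨c1, hc1, hα1, hψ1⟩, ⟨c2, hc2, hα2, hψ2⟩⟩
  · rintro ⟨⟨c1, hc1, hα1, hψ1⟩, ⟨c2, hc2, hα2, hψ2⟩⟩
    exact ⟨_, ⟨c1, hc1, c2, hc2, rfl⟩, (satConj_union _ _ _).mpr ⟨hα1, hα2⟩, hψ1, hψ2⟩

lemma satClauses_and_next (ξ : ℕ → Set AP) (C : Set (Set (Lit AP) × LTL AP)) (χ : LTL AP) :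
    SatClauses ξ {c | ∃ c1 ∈ C, c = (c1.1, .and c1.2 χ)} ↔
      SatClauses ξ C ∧ Sat (suff ξ 1) χ := by
  constructor
  · rintro ⟨_, ⟨c1, hc1, rfl⟩, hα, hψ, hχ⟩
    exact ⟨⟨c1, hc1, hα, hψ⟩, hχ⟩
  · rintro ⟨⟨c1, hc1, hα, hψ⟩, hχ⟩
    exact ⟨_, ⟨c1, hc1, rfl⟩, hα, hψ, hχ⟩

lemma sat_iff_satClauses_DNF (φ : LTL AP) (ξ : ℕ → Set AP) :
    Sat ξ φ ↔ SatClauses ξ (DNF φ) := by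
  induction φ generalizing ξ with
  | tt | atom | natom | next => simp [Sat, SatClauses, DNF, SatConj, SatLit]
  | or φ ψ ihφ ihψ => rw [DNF, satClauses_union, ← ihφ, ← ihψ, Sat]
  | and φ ψ ihφ ihψ => rw [DNF, satClauses_product, ← ihφ, ← ihψ, Sat]
  | untl φ ψ ihφ ihψ =>
    rw [sat_untl_iff, DNF, satClauses_union, satClauses_and_next, ← ihφ, ← ihψ]
  | rel φ ψ ihφ ihψ =>
    rw [sat_rel_iff, DNF, satClauses_union, satClauses_product, satClauses_and_next,
      ← ihφ, ← ihψ]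

/-- `ξ ⊨ φ` iff some clause `α ∧ X ψ ∈ DNF(φ)` has `ξ 0 ⊨ α` and `ξ_1 ⊨ ψ`. -/
theorem dnf_expansion_correct {AP : Type} (φ : LTL AP) (ξ : ℕ → Set AP) :
    Sat ξ φ ↔ ∃ c ∈ DNF φ, SatConj (ξ 0) c.1 ∧ Sat (suff ξ 1) c.2 :=
  sat_iff_satClauses_DNF φ ξ

end DNFLTL
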